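/- Let d ≥ 1, let A be a symmetric d×d real matrix with maximum column norm ‖A‖_{1→2} ≤ 1, and let η > 0, ε ∈ ℝ. Then for every integer T ≥ 1, ‖diag(E[B_T])‖ ≤ 2η ‖E[B_{T−1}]‖_{1→2} + (1 + η² d²) ‖diag(E[B_{T−1}])‖. -/

import Mathlib

open Matrix BigOperators

/-- The rank-one sample matrix `A_{(i,j)} = d² A_{ij} e_i e_jᵀ`. -/
noncomputable def sampleMat {d : ℕ} (A : Matrix (Fin d) (Fin d) ℝ) (p : Fin d × Fin d) :
    Matrix (Fin d) (Fin d) ℝ :=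
  ((d : ℝ) ^ 2 * A p.1 p.2) • Matrix.single p.1 p.2 1

/-- `P_T(ω) = (I + η A_{(i_T,j_T)}) ⋯ (I + η A_{(i_1,j_1)})`. -/
noncomputable def prodMat {d : ℕ} (A : Matrix (Fin d) (Fin d) ℝ) (η : ℝ) :
    (T : ℕ) → (Fin T → Fin d × Fin d) → Matrix (Fin d) (Fin d) ℝ
  | 0, _ => 1
  | (T + 1), ω => (1 + η • sampleMat A (ω (Fin.last T))) * prodMat A η T (fun t => ω t.castSucc)

/-- `E[B_T]`: the average of `P_T(ω)ᵀ ((1-ε)I - A) P_T(ω)` over all sequences `ω`. -/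
noncomputable def EB {d : ℕ} (A : Matrix (Fin d) (Fin d) ℝ) (η ε : ℝ) (T : ℕ) :
    Matrix (Fin d) (Fin d) ℝ :=
  (Fintype.card (Fin T → Fin d × Fin d) : ℝ)⁻¹ •
    ∑ ω : Fin T → Fin d × Fin d,
      (prodMat A η T ω)ᵀ * ((1 - ε) • (1 : Matrix (Fin d) (Fin d) ℝ) - A) * prodMat A η T ω

/-- The operator (spectral) norm of a matrix, as a map on Euclidean space. -/
noncomputable def opNorm {d : ℕ} (M : Matrix (Fin d) (Fin d) ℝ) : ℝ :=
  ‖Matrix.toEuclideanCLM (𝕜 := ℝ) M‖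

/-- The maximum Euclidean column norm `‖M‖_{1→2} = max_j ‖M e_j‖₂`. -/
noncomputable def colNorm {d : ℕ} (M : Matrix (Fin d) (Fin d) ℝ) : ℝ :=
  ⨆ j : Fin d, Real.sqrt (∑ i : Fin d, (M i j) ^ 2)

/-- `diag(M)`: the diagonal matrix with the same diagonal as `M`. -/
def diagPart {d : ℕ} (M : Matrix (Fin d) (Fin d) ℝ) : Matrix (Fin d) (Fin d) ℝ :=
  Matrix.diagonal M.diag

/-!
Conditioning on the first sample gives
`E[B_{T+1}] = 𝔼_p (I + η A_p)ᵀ E[B_T] (I + η A_p)`. The rank-one update `A_{(i,k)}` only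
touches row and column `k` of the sandwiched matrix, so averaging over `p = (i, k)` and using the
symmetry of `E[B_T]` gives
`E[B_{T+1}]_{jj} = E[B_T]_{jj} + 2η ∑ᵢ A_{ij} E[B_T]_{ij} + η² d² ∑ᵢ A_{ij}² E[B_T]_{ii}`.
The middle sum is at most `‖A‖_{1→2} ‖E[B_T]‖_{1→2}` by Cauchy–Schwarz on the `j`-th columns, the
last one at most `‖A‖_{1→2}² max_i |E[B_T]_{ii}|`, and the operator norm of a diagonal matrix is
its largest entry in absolute value.
-/

open scoped Matrix.Norms.L2Operator

lemma sandwich_one_add_smul_single_apply_self {n R : Type*} [Fintype n] [DecidableEq n]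
    [CommRing R] (B : Matrix n n R) (c : R) (i k j : n) :
    ((1 + c • single i k 1)ᵀ * B * (1 + c • single i k 1) : Matrix n n R) j j =
      B j j + if j = k then c * (B j i + B i j) + c ^ 2 * B i i else 0 := by
  simp only [transpose_add, transpose_one, transpose_smul, transpose_single, add_mul, mul_add,
    one_mul, mul_one, smul_mul, Matrix.add_apply, Matrix.smul_apply, smul_eq_mul]
  split_ifs with h
  · subst h
    simp only [single_mul_apply_same, mul_single_apply_same, smul_single, smul_eq_mul, one_mul,
      mul_one]
    ring
  · simp [single_mul_apply_of_ne, mul_single_apply_of_ne, h]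

lemma opNorm_diagPart {d : ℕ} (M : Matrix (Fin d) (Fin d) ℝ) : opNorm (diagPart M) = ‖M.diag‖ :=
  l2_opNorm_diagonal M.diag

lemma colNorm_nonneg {d : ℕ} (M : Matrix (Fin d) (Fin d) ℝ) : 0 ≤ colNorm M :=
  Real.iSup_nonneg fun _ => Real.sqrt_nonneg _

lemma sqrt_sum_sq_le_colNorm {d : ℕ} (M : Matrix (Fin d) (Fin d) ℝ) (j : Fin d) :
    √(∑ i, M i j ^ 2) ≤ colNorm M :=
  le_ciSup (f := fun j => √(∑ i, M i j ^ 2)) (Set.finite_range _).bddAbove j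

lemma sum_sq_le_colNorm_sq {d : ℕ} (M : Matrix (Fin d) (Fin d) ℝ) (j : Fin d) :
    ∑ i, M i j ^ 2 ≤ colNorm M ^ 2 :=
  (Real.sqrt_le_left (colNorm_nonneg M)).1 (sqrt_sum_sq_le_colNorm M j)

lemma abs_sum_mul_le_colNorm_mul_colNorm {d : ℕ} (M N : Matrix (Fin d) (Fin d) ℝ) (j : Fin d) :
    |∑ i, M i j * N i j| ≤ colNorm M * colNorm N := by
  calc |∑ i, M i j * N i j| ≤ √((∑ i, M i j ^ 2) * ∑ i, N i j ^ 2) :=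
        Real.abs_le_sqrt (Finset.sum_mul_sq_le_sq_mul_sq _ _ _)
    _ = √(∑ i, M i j ^ 2) * √(∑ i, N i j ^ 2) := Real.sqrt_mul (by positivity) _
    _ ≤ colNorm M * colNorm N := by
        gcongr
        exacts [colNorm_nonneg _, sqrt_sum_sq_le_colNorm M j, sqrt_sum_sq_le_colNorm N j]

lemma abs_sum_sq_mul_le_colNorm_sq_mul_norm {d : ℕ} (M : Matrix (Fin d) (Fin d) ℝ)
    (v : Fin d → ℝ) (j : Fin d) :
    |∑ i, M i j ^ 2 * v i| ≤ colNorm M ^ 2 * ‖v‖ :=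
  calc |∑ i, M i j ^ 2 * v i| ≤ ∑ i, M i j ^ 2 * ‖v‖ := by
        refine (Finset.abs_sum_le_sum_abs _ _).trans (Finset.sum_le_sum fun i _ => ?_)
        rw [abs_mul, abs_sq]
        exact mul_le_mul_of_nonneg_left (norm_le_pi_norm v i) (sq_nonneg _)
    _ ≤ colNorm M ^ 2 * ‖v‖ := by
        rw [← Finset.sum_mul]
        exact mul_le_mul_of_nonneg_right (sum_sq_le_colNorm_sq M j) (norm_nonneg v)

lemma EB_isSymm {d : ℕ} {A : Matrix (Fin d) (Fin d) ℝ} (hA : A.IsSymm) (η ε : ℝ) (T : ℕ) :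
    (EB A η ε T).IsSymm := by
  have hM : ((1 - ε) • (1 : Matrix (Fin d) (Fin d) ℝ) - A).IsSymm :=
    (isSymm_one.smul _).sub hA
  simp only [EB, IsSymm, transpose_smul, transpose_sum, transpose_mul, transpose_transpose, hM.eq,
    Matrix.mul_assoc]

lemma prodMat_cons {d : ℕ} (A : Matrix (Fin d) (Fin d) ℝ) (η : ℝ) (T : ℕ)
    (p : Fin d × Fin d) (ω : Fin T → Fin d × Fin d) :
    prodMat A η (T + 1) (Fin.cons p ω) = prodMat A η T ω * (1 + η • sampleMat A p) := by
  induction T with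
  | zero => simp [prodMat]
  | succ T ih =>
    have hinit : (fun t : Fin (T + 1) => (Fin.cons p ω : Fin (T + 2) → _) t.castSucc) =
        Fin.cons p (fun t => ω t.castSucc) := by
      funext t
      cases t using Fin.cases <;> simp
    conv_lhs => rw [prodMat, hinit, ih, Fin.cons_last, ← mul_assoc]
    rfl

lemma EB_succ {d : ℕ} (A : Matrix (Fin d) (Fin d) ℝ) (η ε : ℝ) (T : ℕ) :
    EB A η ε (T + 1) = (Fintype.card (Fin d × Fin d) : ℝ)⁻¹ • ∑ p,
      (1 + η • sampleMat A p)ᵀ * EB A η ε T * (1 + η • sampleMat A p) := by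
  have hcard : (Fintype.card (Fin (T + 1) → Fin d × Fin d) : ℝ) =
      Fintype.card (Fin d × Fin d) * Fintype.card (Fin T → Fin d × Fin d) := by
    simp [pow_succ, mul_comm]
  simp only [EB, hcard, mul_inv, mul_smul, Matrix.mul_smul, Matrix.smul_mul, Finset.mul_sum,
    Finset.sum_mul, ← Finset.smul_sum]
  congr 2
  rw [← (Fin.consEquiv fun _ => Fin d × Fin d).sum_comp, Fintype.sum_prod_type]
  refine Finset.sum_congr rfl fun p _ => Finset.sum_congr rfl fun ω _ => ?_
  rw [show Fin.consEquiv (fun _ => Fin d × Fin d) (p, ω) = Fin.cons p ω from rfl, prodMat_cons,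
    transpose_mul]
  simp only [Matrix.mul_assoc]

lemma EB_succ_apply_self {d : ℕ} {A : Matrix (Fin d) (Fin d) ℝ} (hA : A.IsSymm) (η ε : ℝ)
    (T : ℕ) (j : Fin d) :
    EB A η ε (T + 1) j j = EB A η ε T j j + 2 * η * ∑ i, A i j * EB A η ε T i j
      + η ^ 2 * d ^ 2 * ∑ i, A i j ^ 2 * EB A η ε T i i := by
  have hd : (d : ℝ) ≠ 0 := by exact_mod_cast j.pos.ne'
  have hB := (EB_isSymm hA η ε T).apply
  simp only [EB_succ, sampleMat, smul_smul, Matrix.smul_apply, Matrix.sum_apply,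
    sandwich_one_add_smul_single_apply_self, Fintype.sum_prod_type, Finset.sum_add_distrib,
    Finset.sum_ite_eq, Finset.mem_univ, if_true, Finset.sum_const, Finset.card_univ,
    Fintype.card_prod, Fintype.card_fin, nsmul_eq_mul, smul_eq_mul, hB j]
  simp only [Finset.mul_sum]
  field_simp
  rw [Nat.cast_mul, mul_add, mul_add, add_assoc, Finset.mul_sum, Finset.mul_sum,
    ← Finset.sum_add_distrib, ← Finset.sum_add_distrib]
  congr 1
  · ring
  · exact Finset.sum_congr rfl fun i _ => by ring

theorem stmt4_general {d : ℕ} (A : Matrix (Fin d) (Fin d) ℝ) (hsymm : A.IsSymm)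
    (hA : colNorm A ≤ 1) (η ε : ℝ) (hη : 0 < η) (T : ℕ) (hT : 1 ≤ T) :
    opNorm (diagPart (EB A η ε T))
      ≤ 2 * η * colNorm (EB A η ε (T - 1))
        + (1 + η ^ 2 * (d : ℝ) ^ 2) * opNorm (diagPart (EB A η ε (T - 1))) := by
  obtain ⟨T, rfl⟩ := Nat.exists_eq_add_of_le' hT
  rw [Nat.add_sub_cancel, opNorm_diagPart, opNorm_diagPart]
  have hB := colNorm_nonneg (EB A η ε T)
  refine (pi_norm_le_iff_of_nonneg (by positivity)).2 fun j => ?_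
  rw [Real.norm_eq_abs, diag_apply, EB_succ_apply_self hsymm]
  generalize EB A η ε T = B at hB ⊢
  have hoff : |∑ i, A i j * B i j| ≤ colNorm B :=
    (abs_sum_mul_le_colNorm_mul_colNorm A B j).trans (mul_le_of_le_one_left hB hA)
  have hdiag : |∑ i, A i j ^ 2 * B i i| ≤ ‖B.diag‖ :=
    (abs_sum_sq_mul_le_colNorm_sq_mul_norm A B.diag j).trans
      (mul_le_of_le_one_left (norm_nonneg _) (pow_le_one₀ (colNorm_nonneg A) hA))
  have hjj : |B j j| ≤ ‖B.diag‖ := norm_le_pi_norm B.diag j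
  calc _ ≤ |B j j| + |2 * η * ∑ i, A i j * B i j| + |η ^ 2 * d ^ 2 * ∑ i, A i j ^ 2 * B i i| :=
        abs_add_three _ _ _
    _ = |B j j| + 2 * η * |∑ i, A i j * B i j| + η ^ 2 * d ^ 2 * |∑ i, A i j ^ 2 * B i i| := by
        rw [abs_mul (2 * η), abs_mul (η ^ 2 * _), abs_of_pos (by positivity : 0 < 2 * η),
          abs_of_nonneg (by positivity : (0 : ℝ) ≤ η ^ 2 * d ^ 2)]
    _ ≤ ‖B.diag‖ + 2 * η * colNorm B + η ^ 2 * d ^ 2 * ‖B.diag‖ := by gcongr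
    _ = _ := by ring

theorem stmt4 {d : ℕ} (hd : 1 ≤ d) (A : Matrix (Fin d) (Fin d) ℝ) (hsymm : A.IsSymm)
    (hA : colNorm A ≤ 1) (η ε : ℝ) (hη : 0 < η) (T : ℕ) (hT : 1 ≤ T) :
    opNorm (diagPart (EB A η ε T))
      ≤ 2 * η * colNorm (EB A η ε (T - 1))
        + (1 + η ^ 2 * (d : ℝ) ^ 2) * opNorm (diagPart (EB A η ε (T - 1))) :=
  stmt4_general A hsymm hA η ε hη T hT
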